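/- Let the shifted q-derivative centered at 1 be D̃_q f(x) = (f(x) − f(qx + 1 − q))/((1−q)(x−1)) for x ≠ 1, q ≠ 1. For 0 < q < 1 and w(m,u) = a^{log u / log q} (aq; q)_∞ with a = (1−m)/q, one has D̃_{q,m} w(m,u) = w(m,u)(u−m)/((1−q)m(1−m)) for 0 < m < 1 and u ∈ {qⁿ : n ≥ 0}. -/

import Mathlib

/-!
Write `c = 1 - m`. The shifted point `qm + 1 - q` has `1 - (qm + 1 - q) = qc`, so the Hahn shift
replaces `(c; q)_∞` by `(qc; q)_∞ = (c; q)_∞ / (1 - c)` and `(c/q)ⁿ` by `cⁿ`.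
Hence `m · w(qm + 1 - q) = qⁿ · w(m)`, and the `q`-difference
quotient is a rational expression in `w(m)`.
-/

/-- The infinite `q`-Pochhammer symbol `(a; q)_∞`. -/
noncomputable def qPochhammerInf (a q : ℝ) : ℝ :=
  ∏' k : ℕ, (1 - a * q ^ k)

lemma multipliable_one_sub_mul_pow (a : ℝ) {q : ℝ} (hq : |q| < 1) :
    Multipliable fun k : ℕ => 1 - a * q ^ k := by
  have hsum : Summable fun k : ℕ => -(a * q ^ k) :=
    ((summable_geometric_of_abs_lt_one hq).mul_left a).neg
  simpa only [sub_eq_add_neg] using Real.multipliable_one_add_of_summable hsum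

lemma qPochhammerInf_eq_one_sub_mul (a : ℝ) {q : ℝ} (hq : |q| < 1) :
    qPochhammerInf a q = (1 - a) * qPochhammerInf (a * q) q := by
  have hshift : Multipliable fun k : ℕ => 1 - a * q ^ (k + 1) :=
    (multipliable_one_sub_mul_pow (a * q) hq).congr fun k => by ring
  rw [qPochhammerInf, tprod_eq_zero_mul' (f := fun k : ℕ => 1 - a * q ^ k) hshift, qPochhammerInf]
  congr 1
  · rw [pow_zero, mul_one]
  · exact tprod_congr fun k => by ring

/-- The weight `w(m, qⁿ) = aⁿ (aq; q)_∞` with `a = (1 - m)/q`. -/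
noncomputable def qWeight (q : ℝ) (n : ℕ) (m : ℝ) : ℝ :=
  ((1 - m) / q) ^ n * qPochhammerInf (1 - m) q

lemma mul_qWeight_hahnShift {q : ℝ} (hq0 : q ≠ 0) (hq : |q| < 1) (n : ℕ) (m : ℝ) :
    m * qWeight q n (q * m + 1 - q) = q ^ n * qWeight q n m := by
  have hshift : 1 - (q * m + 1 - q) = (1 - m) * q := by ring
  rw [qWeight, qWeight, hshift, qPochhammerInf_eq_one_sub_mul (1 - m) hq,
    mul_div_cancel_right₀ _ hq0, div_pow]
  field_simp
  ring

/-- For `0 < q < 1`, `a = (1−m)/q` with `0 < m < 1`, and `u = qⁿ`, the density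
`w(m,u) = aⁿ (aq;q)_∞` satisfies the shifted (Hahn) `q`-difference equation
`D̃_{q,m} w(m,u) = w(m,u)(u−m)/((1−q)m(1−m))`, where
`D̃_q f(x) = (f(x) − f(qx + 1 − q))/((1−q)(x−1))`. -/
theorem stmt_19 (q m : ℝ) (hq : 0 < q) (hq1 : q < 1)
    (hm : m ∈ Set.Ioo (0:ℝ) 1) (n : ℕ)
    (w : ℝ → ℝ)
    (hw : ∀ m' : ℝ,
      w m' = ((1 - m') / q) ^ n *
        ∏' k : ℕ, (1 - ((1 - m') / q) * q * q ^ (k : ℕ))) :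
    (w m - w (q * m + 1 - q)) / ((1 - q) * (m - 1))
      = w m * (q ^ n - m) / ((1 - q) * m * (1 - m)) := by
  obtain ⟨hm0, hm1⟩ := hm
  have hw_eq : w = qWeight q n := funext fun m' => by
    rw [hw, qWeight, qPochhammerInf, div_mul_cancel₀ _ hq.ne']
  have hq_abs : |q| < 1 := abs_lt.mpr ⟨by linarith, hq1⟩
  have hrel := mul_qWeight_hahnShift hq.ne' hq_abs n m
  rw [← hw_eq] at hrel
  have hshift : w (q * m + 1 - q) = q ^ n * w m / m := by
    rw [eq_div_iff hm0.ne', mul_comm, hrel]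
  have h1q : 1 - q ≠ 0 := by linarith
  have hm1' : m - 1 ≠ 0 := by linarith
  have h1m : 1 - m ≠ 0 := by linarith
  rw [hshift]
  field_simp
  ring
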